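/- arXiv:1702.08486 — 2 statements merged into one kernel-verified Lean document; each statement's English description precedes it below -/
import Mathlib

section
/- If the interval function g decreases on subdivision and is continuous (oscillation zero at every point), then either the upper norm-limit of g over R is −∞, or the norm-limit of g over R exists (the upper and lower norm-limits over R are equal). -/
/-!
Every Riemann sum is at least the infimum `I` of all Riemann sums, so the lower norm-limit is at
least `I`; it remains to bound the upper norm-limit by `D₀.sum g` for every division `D₀`. Given
`ε`, let `E` be a division of small norm and insert the points of `D₀` into it one at a time.
Inserting `c` replaces one term `g u v` by `g u c + g c v`, where `[u, v]` is a short interval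
around `c`, and by continuity at `c` all three terms are tiny. The resulting common refinement
`R` of `E` and `D₀` satisfies `E.sum g ≤ R.sum g + ε`, and `R.sum g ≤ D₀.sum g` because `g`
decreases on subdivision.
-/

open Filter Finset

/-- A division of the interval `[a, b]` into finitely many non-overlapping
subintervals, given by division points `P 0 = a < P 1 < ⋯ < P n = b`. -/
structure Division (a b : ℝ) where
  n : ℕ
  P : ℕ → ℝ
  npos : 0 < n
  mono : ∀ i < n, P i < P (i + 1)
  first : P 0 = a
  last : P n = b

/-- The Riemann sum of the interval function `g` over the division `D`. -/
def Division.sum {a b : ℝ} (D : Division a b) (g : ℝ → ℝ → ℝ) : ℝ :=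
  ∑ i ∈ Finset.range D.n, g (D.P i) (D.P (i + 1))

/-- `D.normLt e` means that the norm (mesh) of the division `D` is `< e`. -/
def Division.normLt {a b : ℝ} (D : Division a b) (e : ℝ) : Prop :=
  ∀ i < D.n, D.P (i + 1) - D.P i < e

/-- A Riemann succession: a sequence of divisions whose norms tend to `0`. -/
def IsRiemannSuccession {a b : ℝ} (D : ℕ → Division a b) : Prop :=
  ∀ e > 0, ∃ N, ∀ n ≥ N, (D n).normLt e

/-- The upper norm-limit of `g` over `[a, b]`: the limit as `e → 0⁺` (equivalently,
the infimum over `e > 0`) of the supremum of Riemann sums over divisions of norm `< e`. -/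
noncomputable def upperNormLimit (g : ℝ → ℝ → ℝ) (a b : ℝ) : EReal :=
  ⨅ e : {e : ℝ // 0 < e},
    sSup {s : EReal | ∃ D : Division a b, D.normLt e.1 ∧ s = ((D.sum g : ℝ) : EReal)}

/-- The lower norm-limit of `g` over `[a, b]`. -/
noncomputable def lowerNormLimit (g : ℝ → ℝ → ℝ) (a b : ℝ) : EReal :=
  ⨆ e : {e : ℝ // 0 < e},
    sInf {s : EReal | ∃ D : Division a b, D.normLt e.1 ∧ s = ((D.sum g : ℝ) : EReal)}

/-- The oscillation of the interval function `g` (defined on subintervals of `[A, B]`)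
at the point `x`: the limit as `δ → 0⁺` (equivalently the infimum over `δ > 0`) of the
supremum of `|g I|` over subintervals `I` of `[A, B]` contained in the interval of
center `x` and length `δ`. -/
noncomputable def osc (g : ℝ → ℝ → ℝ) (A B x : ℝ) : EReal :=
  ⨅ δ : {δ : ℝ // 0 < δ},
    sSup {y : EReal | ∃ a b : ℝ, A ≤ a ∧ a < b ∧ b ≤ B ∧
      x - δ.1 / 2 ≤ a ∧ b ≤ x + δ.1 / 2 ∧ y = ((|g a b| : ℝ) : EReal)}

open Topology

theorem Finset.sum_range_eq_sum_Ico_blocks {M : Type*} [AddCommMonoid M] (f : ℕ → M)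
    (k : ℕ → ℕ) (m : ℕ) (h0 : k 0 = 0) (hk : ∀ j < m, k j ≤ k (j + 1)) :
    ∑ i ∈ range (k m), f i = ∑ j ∈ range m, ∑ i ∈ Ico (k j) (k (j + 1)), f i := by
  induction m with
  | zero => simp [h0]
  | succ m ih =>
    rw [sum_range_succ, ← ih fun j hj => hk j (by omega),
      sum_range_add_sum_Ico _ (hk m (Nat.lt_succ_self m))]

def DecreasesOnSubdivision (g : ℝ → ℝ → ℝ) (A B : ℝ) : Prop :=
  ∀ a b : ℝ, A ≤ a → a < b → b ≤ B → ∀ D : Division a b, D.sum g ≤ g a b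

def SmallNear (g : ℝ → ℝ → ℝ) (A B x r ε : ℝ) : Prop :=
  ∀ a b : ℝ, A ≤ a → a < b → b ≤ B → x - r ≤ a → b ≤ x + r → |g a b| ≤ ε

theorem eventually_smallNear_of_osc_eq_zero {g : ℝ → ℝ → ℝ} {A B x ε : ℝ}
    (h : osc g A B x = 0) (hε : 0 < ε) : ∀ᶠ r in 𝓝[>] 0, SmallNear g A B x r ε := by
  obtain ⟨⟨δ, hδ⟩, hsup⟩ := iInf_lt_iff.1 (h.trans_lt (EReal.coe_pos.2 hε))
  filter_upwards [Ioc_mem_nhdsGT (half_pos hδ)] with r hr a b ha hab hb hxa hbx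
  have hmem : ((|g a b| : ℝ) : EReal) ∈ {y : EReal | ∃ a b : ℝ, A ≤ a ∧ a < b ∧ b ≤ B ∧
      x - δ / 2 ≤ a ∧ b ≤ x + δ / 2 ∧ y = ((|g a b| : ℝ) : EReal)} :=
    ⟨a, b, ha, hab, hb, by linarith [hr.2], by linarith [hr.2], rfl⟩
  exact_mod_cast ((le_sSup hmem).trans_lt hsup).le

namespace Division

variable {a b : ℝ}

theorem normLt.mono {D : Division a b} {e e' : ℝ} (hD : D.normLt e) (he : e ≤ e') :
    D.normLt e' :=
  fun i hi => (hD i hi).trans_le he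

variable (D : Division a b)

theorem strictMonoOn_P : StrictMonoOn D.P (Set.Iic D.n) :=
  strictMonoOn_Iic_of_lt_succ fun i hi => D.mono i hi

theorem left_le_P {i : ℕ} (hi : i ≤ D.n) : a ≤ D.P i := by
  simpa [D.first] using D.strictMonoOn_P.monotoneOn (Nat.zero_le D.n) hi (Nat.zero_le i)

theorem P_le_right {i : ℕ} (hi : i ≤ D.n) : D.P i ≤ b := by
  simpa [D.last] using D.strictMonoOn_P.monotoneOn hi (le_refl D.n) hi

theorem exists_normLt (hab : a < b) {e : ℝ} (he : 0 < e) : ∃ D : Division a b, D.normLt e := by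
  obtain ⟨n, hn⟩ := exists_nat_gt ((b - a) / e)
  have hn0 : (0 : ℝ) < n := (div_pos (sub_pos.2 hab) he).trans hn
  refine ⟨⟨n, fun i => a + i * ((b - a) / n), by exact_mod_cast hn0, fun i _ => ?_, by simp,
    by field_simp; ring⟩, fun i _ => ?_⟩
  · push_cast
    linarith [div_pos (sub_pos.2 hab) hn0]
  · push_cast
    rw [div_lt_comm₀ he hn0] at hn
    linarith

noncomputable def points : Finset ℝ := (range (D.n + 1)).image D.P

theorem mem_points {x : ℝ} : x ∈ D.points ↔ ∃ i ≤ D.n, D.P i = x := by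
  simp [points]

theorem exists_between_of_notMem_points {x : ℝ} (hx : x ∈ Set.Icc a b) (hxD : x ∉ D.points) :
    ∃ i < D.n, D.P i < x ∧ x < D.P (i + 1) := by
  by_contra! h
  have hlt : ∀ i ≤ D.n, D.P i < x := by
    intro i hi
    induction i with
    | zero => exact (D.first ▸ hx.1).lt_of_ne fun h0 => hxD (D.mem_points.2 ⟨0, by omega, h0⟩)
    | succ i ih =>
      exact (h i (by omega) (ih (by omega))).lt_of_ne fun h1 => hxD (D.mem_points.2 ⟨i + 1, hi, h1⟩)
  exact (hlt D.n le_rfl).not_ge (D.last.symm ▸ hx.2)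
theorem mem_Icc_of_mem_points {x : ℝ} (hx : x ∈ D.points) :
    x ∈ Set.Icc a b := by
  obtain ⟨i, hi, rfl⟩ := D.mem_points.1 hx
  exact ⟨D.left_le_P hi, D.P_le_right hi⟩

section insertAt

variable {i : ℕ} {c : ℝ} (hi : i < D.n) (hlt : D.P i < c) (hgt : c < D.P (i + 1))

def insertAt : Division a b where
  n := D.n + 1
  P j := if j ≤ i then D.P j else if j = i + 1 then c else D.P (j - 1)
  npos := D.n.succ_pos
  mono j hj := by
    rcases (by omega : j + 1 ≤ i ∨ j = i ∨ j = i + 1 ∨ i + 2 ≤ j) with h | rfl | rfl | h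
    · simpa [h, show j ≤ i by omega] using D.mono j (by omega)
    · simpa using hlt
    · simpa using hgt
    · have := D.mono (j - 1) (by omega)
      simp only [show ¬ j ≤ i by omega, show ¬ j + 1 ≤ i by omega, show j ≠ i + 1 by omega,
        show j + 1 ≠ i + 1 by omega, if_false, Nat.add_sub_cancel]
      rwa [Nat.sub_add_cancel (by omega)] at this
  first := by simp [D.first]
  last := by simp [show ¬ D.n + 1 ≤ i by omega, show D.n ≠ i by omega, D.last]

variable {D hi hlt hgt}

theorem insertAt_P_of_le {j : ℕ} (hj : j ≤ i) : (D.insertAt hi hlt hgt).P j = D.P j :=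
  if_pos hj

theorem insertAt_P_succ : (D.insertAt hi hlt hgt).P (i + 1) = c := by
  simp [insertAt]

theorem insertAt_P_succ_of_lt {j : ℕ} (hj : i < j) :
    (D.insertAt hi hlt hgt).P (j + 1) = D.P j := by
  simp [insertAt, show ¬ j + 1 ≤ i by omega, show j ≠ i by omega]

theorem insertAt_n : (D.insertAt hi hlt hgt).n = D.n + 1 := rfl

theorem insertAt_sum (g : ℝ → ℝ → ℝ) :
    (D.insertAt hi hlt hgt).sum g + g (D.P i) (D.P (i + 1)) =
      D.sum g + g (D.P i) c + g c (D.P (i + 1)) := by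
  obtain ⟨m, hm⟩ : ∃ m, D.n = i + 1 + m := ⟨D.n - (i + 1), by omega⟩
  have hm' : (D.insertAt hi hlt hgt).n = i + 2 + m := by rw [insertAt_n]; omega
  rw [sum, sum, hm, hm', sum_range_add _ (i + 2) m, sum_range_add _ (i + 1) m]
  simp only [sum_range_succ]
  have hhead : ∑ j ∈ range i,
      g ((D.insertAt hi hlt hgt).P j) ((D.insertAt hi hlt hgt).P (j + 1)) =
      ∑ j ∈ range i, g (D.P j) (D.P (j + 1)) := by
    refine sum_congr rfl fun j hj => ?_
    rw [mem_range] at hj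
    rw [insertAt_P_of_le hj.le, insertAt_P_of_le hj]
  have htail : ∀ k,
      g ((D.insertAt hi hlt hgt).P (i + 2 + k)) ((D.insertAt hi hlt hgt).P (i + 2 + k + 1)) =
      g (D.P (i + 1 + k)) (D.P (i + 1 + k + 1)) := by
    intro k
    rw [show i + 2 + k = i + 1 + k + 1 by omega, insertAt_P_succ_of_lt (by omega),
      insertAt_P_succ_of_lt (by omega)]
  simp only [hhead, htail, insertAt_P_of_le (le_refl i), insertAt_P_succ,
    insertAt_P_succ_of_lt (Nat.lt_succ_self i)]
  ring

theorem normLt.insertAt {e : ℝ} (hD : D.normLt e) : (D.insertAt hi hlt hgt).normLt e := by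
  intro j hj
  rw [insertAt_n] at hj
  rcases (by omega : j + 1 ≤ i ∨ j = i ∨ j = i + 1 ∨ i + 1 < j) with h | rfl | rfl | h
  · rw [insertAt_P_of_le h, insertAt_P_of_le (by omega)]
    exact hD j (by omega)
  · rw [insertAt_P_succ, insertAt_P_of_le le_rfl]
    linarith [hD j hi]
  · rw [insertAt_P_succ, insertAt_P_succ_of_lt (Nat.lt_succ_self i)]
    linarith [hD i hi]
  · obtain ⟨k, rfl⟩ : ∃ k, j = k + 1 := ⟨j - 1, by omega⟩
    rw [insertAt_P_succ_of_lt (by omega), insertAt_P_succ_of_lt (by omega)]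
    exact hD k (by omega)

theorem points_subset_insertAt : D.points ⊆ (D.insertAt hi hlt hgt).points := by
  intro x hx
  obtain ⟨k, hk, rfl⟩ := D.mem_points.1 hx
  rw [mem_points, insertAt_n]
  rcases le_or_gt k i with h | h
  · exact ⟨k, by omega, insertAt_P_of_le h⟩
  · exact ⟨k + 1, by omega, insertAt_P_succ_of_lt h⟩

theorem mem_points_insertAt : c ∈ (D.insertAt hi hlt hgt).points :=
  (mem_points _).2 ⟨i + 1, by rw [insertAt_n]; omega, insertAt_P_succ⟩

end insertAt

def block {p q : ℕ} (hpq : p < q) (hq : q ≤ D.n) :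
    Division (D.P p) (D.P q) where
  n := q - p
  P i := D.P (p + i)
  npos := by omega
  mono i hi := D.mono (p + i) (by omega)
  first := by simp
  last := by rw [Nat.add_sub_cancel' hpq.le]

theorem block_sum {p q : ℕ} (hpq : p < q) (hq : q ≤ D.n) (g : ℝ → ℝ → ℝ) :
    (D.block hpq hq).sum g = ∑ i ∈ Ico p q, g (D.P i) (D.P (i + 1)) := by
  rw [sum_Ico_eq_sum_range]
  rfl

theorem exists_index_of_points_subset {D R : Division a b} (h : D.points ⊆ R.points) :
    ∃ k : ℕ → ℕ, k 0 = 0 ∧ k D.n = R.n ∧ (∀ j ≤ D.n, k j ≤ R.n ∧ R.P (k j) = D.P j) ∧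
      ∀ j < D.n, k j < k (j + 1) := by
  have : ∀ j ≤ D.n, ∃ i ≤ R.n, R.P i = D.P j := fun j hj =>
    R.mem_points.1 (h (D.mem_points.2 ⟨j, hj, rfl⟩))
  choose! k hkR hk using this
  have hinj := R.strictMonoOn_P.injOn
  refine ⟨k, hinj (hkR 0 (Nat.zero_le _)) (Nat.zero_le R.n) ?_,
    hinj (hkR D.n le_rfl) (le_refl R.n) ?_, fun j hj => ⟨hkR j hj, hk j hj⟩, fun j hj => ?_⟩
  · rw [hk 0 (Nat.zero_le _), D.first, R.first]
  · rw [hk D.n le_rfl, D.last, R.last]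
  · rw [← R.strictMonoOn_P.lt_iff_lt (hkR j hj.le) (hkR (j + 1) hj), hk j hj.le, hk (j + 1) hj]
    exact D.mono j hj

variable {g : ℝ → ℝ → ℝ}

theorem sum_le_of_points_subset (hg : DecreasesOnSubdivision g a b)
    {D R : Division a b} (h : D.points ⊆ R.points) : R.sum g ≤ D.sum g := by
  obtain ⟨k, hk0, hkn, hk, hkmono⟩ := exists_index_of_points_subset h
  rw [sum, ← hkn, sum_range_eq_sum_Ico_blocks _ k D.n hk0 fun j hj => (hkmono j hj).le, sum]
  refine sum_le_sum fun j hj => ?_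
  rw [mem_range] at hj
  calc ∑ i ∈ Ico (k j) (k (j + 1)), g (R.P i) (R.P (i + 1))
      = (R.block (hkmono j hj) (hk (j + 1) hj).1).sum g := (R.block_sum _ _ g).symm
    _ ≤ g (R.P (k j)) (R.P (k (j + 1))) :=
      hg _ _ (R.left_le_P (hk j hj.le).1)
        (R.strictMonoOn_P (hk j hj.le).1 (hk (j + 1) hj).1 (hkmono j hj))
        (R.P_le_right (hk (j + 1) hj).1) _
    _ = g (D.P j) (D.P (j + 1)) := by rw [(hk j hj.le).2, (hk (j + 1) hj).2]

variable {e ε : ℝ}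

theorem exists_mem_points_sum_le (E : Division a b) (hE : E.normLt e) {x : ℝ}
    (hx : x ∈ Set.Icc a b) (hε : 0 ≤ ε) (hsmall : SmallNear g a b x e ε) :
    ∃ E' : Division a b, E'.normLt e ∧ E.points ⊆ E'.points ∧ x ∈ E'.points ∧
      E.sum g ≤ E'.sum g + 3 * ε := by
  by_cases hxE : x ∈ E.points
  · exact ⟨E, hE, subset_rfl, hxE, by linarith⟩
  obtain ⟨i, hi, hlt, hgt⟩ := E.exists_between_of_notMem_points hx hxE
  refine ⟨E.insertAt hi hlt hgt, hE.insertAt, points_subset_insertAt, mem_points_insertAt, ?_⟩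
  have hgap := hE i hi
  have ha := E.left_le_P hi.le
  have hb := E.P_le_right hi
  have h₁ := abs_le.1 (hsmall _ _ ha (E.mono i hi) hb (by linarith) (by linarith))
  have h₂ := abs_le.1 (hsmall _ _ ha hlt (by linarith) (by linarith) (by linarith))
  have h₃ := abs_le.1 (hsmall _ _ (by linarith) hgt hb (by linarith) (by linarith))
  linarith [insertAt_sum (hi := hi) (hlt := hlt) (hgt := hgt) g]

theorem exists_finset_subset_points_sum_le (E : Division a b) (hE : E.normLt e) (hε : 0 ≤ ε)
    (S : Finset ℝ) (hS : ∀ x ∈ S, x ∈ Set.Icc a b ∧ SmallNear g a b x e ε) :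
    ∃ R : Division a b, R.normLt e ∧ S ⊆ R.points ∧ E.sum g ≤ R.sum g + 3 * S.card * ε := by
  induction S using Finset.induction_on with
  | empty => exact ⟨E, hE, empty_subset _, by simp⟩
  | insert x S hxS ih =>
    obtain ⟨R, hR, hSR, hsum⟩ := ih fun y hy => hS y (mem_insert_of_mem hy)
    obtain ⟨hx, hxsmall⟩ := hS x (mem_insert_self x S)
    obtain ⟨R', hR', hRR', hxR', hsum'⟩ := R.exists_mem_points_sum_le hR hx hε hxsmall
    refine ⟨R', hR', insert_subset hxR' (hSR.trans hRR'), ?_⟩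
    rw [card_insert_of_notMem hxS]
    push_cast
    linarith

theorem exists_pos_forall_normLt_sum_le_add (hg : DecreasesOnSubdivision g a b)
    (hcont : ∀ x ∈ Set.Icc a b, osc g a b x = 0) (D₀ : Division a b) (hε : 0 < ε) :
    ∃ e > 0, ∀ E : Division a b, E.normLt e → E.sum g ≤ D₀.sum g + ε := by
  have hcard : (0 : ℝ) < D₀.points.card :=
    Nat.cast_pos.2 (card_pos.2 ⟨a, D₀.mem_points.2 ⟨0, Nat.zero_le _, D₀.first⟩⟩)
  set ε' := ε / (3 * D₀.points.card)
  have hε' : 0 < ε' := by positivity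
  obtain ⟨e, hsmall, he⟩ : ∃ e, (∀ x ∈ D₀.points, SmallNear g a b x e ε') ∧ 0 < e :=
    (((eventually_all_finset _).2 fun x hx => eventually_smallNear_of_osc_eq_zero
      (hcont x (D₀.mem_Icc_of_mem_points hx)) hε').and self_mem_nhdsWithin).exists
  refine ⟨e, he, fun E hE => ?_⟩
  obtain ⟨R, -, hR, hsum⟩ := E.exists_finset_subset_points_sum_le hE hε'.le D₀.points
    fun x hx => ⟨D₀.mem_Icc_of_mem_points hx, hsmall x hx⟩
  have hε'_mul : 3 * D₀.points.card * ε' = ε := by simp only [ε']; field_simp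
  linarith [sum_le_of_points_subset hg hR]

end Division

section NormLimit

variable {a b : ℝ} {g : ℝ → ℝ → ℝ}

theorem upperNormLimit_le_sum (hg : DecreasesOnSubdivision g a b)
    (hcont : ∀ x ∈ Set.Icc a b, osc g a b x = 0) (D₀ : Division a b) :
    upperNormLimit g a b ≤ D₀.sum g := by
  refine EReal.le_of_forall_lt_iff_le.1 fun z hz => ?_
  obtain ⟨e, he, hE⟩ := D₀.exists_pos_forall_normLt_sum_le_add hg hcont
    (sub_pos.2 (EReal.coe_lt_coe_iff.1 hz))
  refine iInf_le_of_le ⟨e, he⟩ (sSup_le ?_)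
  rintro s ⟨E, hEe, rfl⟩
  exact EReal.coe_le_coe_iff.2 (by linarith [hE E hEe])

theorem iInf_sum_le_lowerNormLimit (g : ℝ → ℝ → ℝ) (a b : ℝ) :
    ⨅ D : Division a b, (D.sum g : EReal) ≤ lowerNormLimit g a b :=
  le_iSup_of_le ⟨1, one_pos⟩ (le_sInf fun _ ⟨D, _, hs⟩ => hs ▸ iInf_le _ D)

theorem lowerNormLimit_le_upperNormLimit (hab : a < b) :
    lowerNormLimit g a b ≤ upperNormLimit g a b := by
  refine iSup_le fun e₁ => le_iInf fun e₂ => ?_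
  obtain ⟨D, hD⟩ := Division.exists_normLt hab (lt_min e₁.2 e₂.2)
  exact le_trans (b := (D.sum g : EReal)) (sInf_le ⟨D, hD.mono (min_le_left _ _), rfl⟩)
    (le_sSup ⟨D, hD.mono (min_le_right _ _), rfl⟩)

end NormLimit

/-- (3.2 Corollary): If the interval function `g` decreases on subdivision (every Riemann
sum over a division of a subinterval `J` is at most `g(J)`) and is continuous (zero
oscillation at every point of `[A, B]`), then either the upper norm-limit of `g` over
`[A, B]` is `−∞`, or the norm-limit of `g` over `[A, B]` exists: the upper and lower
norm-limits are equal and finite. -/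
theorem normLimit_exists_of_decreasing_continuous (g : ℝ → ℝ → ℝ) (A B : ℝ) (hAB : A < B)
    (hdec : ∀ a b : ℝ, A ≤ a → a < b → b ≤ B → ∀ D : Division a b, D.sum g ≤ g a b)
    (hcont : ∀ x ∈ Set.Icc A B, osc g A B x = 0) :
    upperNormLimit g A B = ⊥ ∨
      ∃ L : ℝ, upperNormLimit g A B = (L : EReal) ∧ lowerNormLimit g A B = (L : EReal) := by
  have hle : ∀ D : Division A B, upperNormLimit g A B ≤ D.sum g :=
    upperNormLimit_le_sum hdec hcont
  have hlower : lowerNormLimit g A B = upperNormLimit g A B :=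
    (lowerNormLimit_le_upperNormLimit hAB).antisymm
      ((le_iInf hle).trans (iInf_sum_le_lowerNormLimit g A B))
  obtain ⟨D, -⟩ := Division.exists_normLt hAB one_pos
  rw [hlower]
  generalize upperNormLimit g A B = u at hle
  induction u using EReal.rec with
  | bot => exact Or.inl rfl
  | coe L => exact Or.inr ⟨L, rfl, rfl⟩
  | top => exact absurd (hle D) (by simp)
end

section
/- Product formula for two-dimensional restricted Burkill integrals of product functions: if g(T) = g₁(I_x)·g₂(I_y) for each rectangle T = I_x × I_y, and g₁ ≥ 0, g₂ ≥ 0, then the upper restricted norm-limit of g over the rectangle T₀ = J_x × J_y equals (upper norm-limit of g₁ over J_x) · (upper norm-limit of g₂ over J_y), assuming both factors on the right are finite. -/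
/-
The grid sum factors as `(∑ g₁) · (∑ g₂)`, and a grid has cells of diameter `< e` as soon as
both divisions have norm `< e / 2`, while it forces both norms to be `< e`. So fine grids are
exactly pairs of fine divisions, and the restricted norm-limit is the limit of the products of
one-dimensional sums. Above, sums of norm `< e` are eventually `< U₁ + ε`, `< U₂ + ε`, and, being
nonnegative, their product is `≤ (U₁ + ε)(U₂ + ε)`; below, fine divisions with sums `ε`-close to
`U₁`, `U₂` exist, and their product is close to `U₁ U₂` by continuity of multiplication.
-/

open Filter Finset

/-- The upper restricted norm-limit of a rectangle function `g` over the rectangle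
`[ax, bx] × [ay, by]`: the limit as `e → 0⁺` of the supremum of `∑_{T ∈ D} g(T)` over
restricted (grid) divisions `D` in which every cell has diameter `< e`. -/
noncomputable def upperRestrictedNormLimit (g : ℝ → ℝ → ℝ → ℝ → ℝ)
    (ax bx ay b2 : ℝ) : EReal :=
  ⨅ e : {e : ℝ // 0 < e},
    sSup {s : EReal | ∃ (Dx : Division ax bx) (Dy : Division ay b2),
      (∀ i < Dx.n, ∀ j < Dy.n,
        Real.sqrt ((Dx.P (i + 1) - Dx.P i) ^ 2 + (Dy.P (j + 1) - Dy.P j) ^ 2) < e.1) ∧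
      s = ((∑ i ∈ Finset.range Dx.n, ∑ j ∈ Finset.range Dy.n,
        g (Dx.P i) (Dx.P (i + 1)) (Dy.P j) (Dy.P (j + 1)) : ℝ) : EReal)}

lemma EReal.iInf_sSup_eq_coe {ι : Sort*} (T : ι → Set EReal) (c : ℝ)
    (hle : ∀ z : ℝ, c < z → ∃ i, ∀ s ∈ T i, s ≤ z)
    (hge : ∀ i, ∀ z : ℝ, z < c → ∃ s ∈ T i, (z : EReal) ≤ s) :
    ⨅ i, sSup (T i) = c := by
  refine le_antisymm (EReal.le_of_forall_lt_iff_le.mp fun z hz => ?_)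
    (le_iInf fun i => EReal.ge_of_forall_gt_iff_ge.mp fun z hz => ?_)
  · obtain ⟨i, hi⟩ := hle z (EReal.coe_lt_coe_iff.mp hz)
    exact iInf_le_of_le i (sSup_le hi)
  · obtain ⟨s, hs, hzs⟩ := hge i z (EReal.coe_lt_coe_iff.mp hz)
    exact le_sSup_of_le hs hzs

lemma Real.exists_pos_forall_mul_lt {U₁ U₂ z : ℝ} (h : U₁ * U₂ < z) :
    ∃ ε > 0, ∀ x y, |x - U₁| < ε → |y - U₂| < ε → x * y < z := by
  obtain ⟨ε, hε, hball⟩ := Metric.eventually_nhds_iff.mp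
    ((continuous_mul.tendsto (U₁, U₂)).eventually (gt_mem_nhds h))
  exact ⟨ε, hε, fun x y hx hy => hball (y := (x, y))
    (by simpa [Prod.dist_eq, Real.dist_eq] using And.intro hx hy)⟩

lemma Real.exists_pos_forall_lt_mul {U₁ U₂ z : ℝ} (h : z < U₁ * U₂) :
    ∃ ε > 0, ∀ x y, |x - U₁| < ε → |y - U₂| < ε → z < x * y := by
  obtain ⟨ε, hε, hball⟩ := Metric.eventually_nhds_iff.mp
    ((continuous_mul.tendsto (U₁, U₂)).eventually (lt_mem_nhds h))
  exact ⟨ε, hε, fun x y hx hy => hball (y := (x, y))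
    (by simpa [Prod.dist_eq, Real.dist_eq] using And.intro hx hy)⟩

namespace Division

variable {a b c d : ℝ}

lemma strictMonoOn (D : Division a b) : StrictMonoOn D.P (Set.Iic D.n) :=
  strictMonoOn_Iic_of_lt_succ fun i hi => by simpa using D.mono i hi

lemma mem_Icc (D : Division a b) {i : ℕ} (hi : i ≤ D.n) : D.P i ∈ Set.Icc a b := by
  have hmono := D.strictMonoOn.monotoneOn
  refine ⟨?_, ?_⟩
  · simpa [D.first] using hmono (Set.mem_Iic.mpr (Nat.zero_le _)) hi (Nat.zero_le i)
  · simpa [D.last] using hmono hi (Set.mem_Iic.mpr le_rfl) hi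

lemma sum_nonneg (D : Division a b) {g : ℝ → ℝ → ℝ}
    (hg : ∀ x y, a ≤ x → x < y → y ≤ b → 0 ≤ g x y) : 0 ≤ D.sum g :=
  Finset.sum_nonneg fun i hi => by
    have hi := Finset.mem_range.mp hi
    exact hg _ _ (D.mem_Icc hi.le).1 (D.mono i hi) (D.mem_Icc hi).2

def gridNormLt (Dx : Division a b) (Dy : Division c d) (e : ℝ) : Prop :=
  ∀ i < Dx.n, ∀ j < Dy.n,
    Real.sqrt ((Dx.P (i + 1) - Dx.P i) ^ 2 + (Dy.P (j + 1) - Dy.P j) ^ 2) < e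

lemma normLt_of_gridNormLt {Dx : Division a b} {Dy : Division c d} {e : ℝ}
    (h : gridNormLt Dx Dy e) : Dx.normLt e ∧ Dy.normLt e := by
  constructor
  · intro i hi
    refine (le_abs_self _).trans_lt ((Real.abs_le_sqrt ?_).trans_lt (h i hi 0 Dy.npos))
    exact le_add_of_nonneg_right (sq_nonneg _)
  · intro j hj
    refine (le_abs_self _).trans_lt ((Real.abs_le_sqrt ?_).trans_lt (h 0 Dx.npos j hj))
    exact le_add_of_nonneg_left (sq_nonneg _)

lemma gridNormLt_of_normLt_half {Dx : Division a b} {Dy : Division c d} {e : ℝ}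
    (hx : Dx.normLt (e / 2)) (hy : Dy.normLt (e / 2)) : gridNormLt Dx Dy e := by
  intro i hi j hj
  have hx₀ := sub_pos.mpr (Dx.mono i hi)
  have hy₀ := sub_pos.mpr (Dy.mono j hj)
  have hx' := hx i hi
  have hy' := hy j hj
  rw [Real.sqrt_lt' (by linarith)]
  nlinarith

end Division

section NormLimit

variable {g : ℝ → ℝ → ℝ} {a b U : ℝ}

lemma Division.exists_forall_normLt_sum_lt (hU : upperNormLimit g a b = U) {ε : ℝ} (hε : 0 < ε) :
    ∃ e > 0, ∀ D : Division a b, D.normLt e → D.sum g < U + ε := by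
  have : upperNormLimit g a b < ((U + ε : ℝ) : EReal) := by
    rw [hU]
    exact_mod_cast lt_add_of_pos_right U hε
  obtain ⟨e, he⟩ := iInf_lt_iff.mp this
  refine ⟨e.1, e.2, fun D hD => ?_⟩
  have hD : ((D.sum g : ℝ) : EReal) ≤
      sSup {s : EReal | ∃ D : Division a b, D.normLt e ∧ s = ((D.sum g : ℝ) : EReal)} :=
    le_sSup ⟨D, hD, rfl⟩
  exact_mod_cast hD.trans_lt he

lemma Division.exists_normLt_sum_gt (hU : upperNormLimit g a b = U) {e ε : ℝ} (he : 0 < e)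
    (hε : 0 < ε) : ∃ D : Division a b, D.normLt e ∧ U - ε < D.sum g := by
  have : ((U - ε : ℝ) : EReal) <
      sSup {s : EReal | ∃ D : Division a b, D.normLt e ∧ s = ((D.sum g : ℝ) : EReal)} := by
    have hle : upperNormLimit g a b ≤ _ := iInf_le _ ⟨e, he⟩
    rw [hU] at hle
    exact lt_of_lt_of_le (by exact_mod_cast sub_lt_self U hε) hle
  obtain ⟨s, ⟨D, hD, rfl⟩, hlt⟩ := lt_sSup_iff.mp this
  exact ⟨D, hD, by exact_mod_cast hlt⟩

lemma Division.exists_normLt_abs_sum_sub_lt (hU : upperNormLimit g a b = U) {e ε : ℝ}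
    (he : 0 < e) (hε : 0 < ε) : ∃ D : Division a b, D.normLt e ∧ |D.sum g - U| < ε := by
  obtain ⟨e', he', hlt⟩ := exists_forall_normLt_sum_lt hU hε
  obtain ⟨D, hD, hgt⟩ := exists_normLt_sum_gt hU (lt_min he he') hε
  refine ⟨D, fun i hi => (hD i hi).trans_le (min_le_left _ _), abs_sub_lt_iff.mpr ⟨?_, ?_⟩⟩
  · linarith [hlt D fun i hi => (hD i hi).trans_le (min_le_right _ _)]
  · linarith

end NormLimit

section Product

variable {g₁ g₂ : ℝ → ℝ → ℝ} {ax bx ay b2 U₁ U₂ : ℝ}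

lemma Division.exists_forall_gridNormLt_sum_mul_sum_lt (hU₁ : upperNormLimit g₁ ax bx = U₁)
    (hU₂ : upperNormLimit g₂ ay b2 = U₂)
    (h₁ : ∀ x y : ℝ, ax ≤ x → x < y → y ≤ bx → 0 ≤ g₁ x y)
    (h₂ : ∀ x y : ℝ, ay ≤ x → x < y → y ≤ b2 → 0 ≤ g₂ x y) {z : ℝ} (hz : U₁ * U₂ < z) :
    ∃ e > 0, ∀ (Dx : Division ax bx) (Dy : Division ay b2),
      gridNormLt Dx Dy e → Dx.sum g₁ * Dy.sum g₂ < z := by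
  obtain ⟨ε, hε, hmul⟩ := Real.exists_pos_forall_mul_lt hz
  have hε' : |ε / 2| < ε := by rw [abs_of_pos (half_pos hε)]; exact half_lt_self hε
  obtain ⟨e₁, he₁, hlt₁⟩ := exists_forall_normLt_sum_lt hU₁ (half_pos hε)
  obtain ⟨e₂, he₂, hlt₂⟩ := exists_forall_normLt_sum_lt hU₂ (half_pos hε)
  refine ⟨min e₁ e₂, lt_min he₁ he₂, fun Dx Dy hD => ?_⟩
  obtain ⟨hx, hy⟩ := normLt_of_gridNormLt hD
  have hx₁ := hlt₁ Dx fun i hi => (hx i hi).trans_le (min_le_left _ _)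
  have hy₂ := hlt₂ Dy fun j hj => (hy j hj).trans_le (min_le_right _ _)
  calc Dx.sum g₁ * Dy.sum g₂ ≤ (U₁ + ε / 2) * (U₂ + ε / 2) :=
        mul_le_mul hx₁.le hy₂.le (Dy.sum_nonneg h₂) ((Dx.sum_nonneg h₁).trans hx₁.le)
    _ < z := hmul _ _ (by rwa [add_sub_cancel_left]) (by rwa [add_sub_cancel_left])

lemma Division.exists_gridNormLt_lt_sum_mul_sum (hU₁ : upperNormLimit g₁ ax bx = U₁)
    (hU₂ : upperNormLimit g₂ ay b2 = U₂) {e z : ℝ} (he : 0 < e) (hz : z < U₁ * U₂) :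
    ∃ (Dx : Division ax bx) (Dy : Division ay b2),
      gridNormLt Dx Dy e ∧ z < Dx.sum g₁ * Dy.sum g₂ := by
  obtain ⟨ε, hε, hmul⟩ := Real.exists_pos_forall_lt_mul hz
  obtain ⟨Dx, hDx, hx⟩ := exists_normLt_abs_sum_sub_lt hU₁ (half_pos he) hε
  obtain ⟨Dy, hDy, hy⟩ := exists_normLt_abs_sum_sub_lt hU₂ (half_pos he) hε
  exact ⟨Dx, Dy, gridNormLt_of_normLt_half hDx hDy, hmul _ _ hx hy⟩

end Product

theorem upperRestrictedNormLimit_prod_general (g : ℝ → ℝ → ℝ → ℝ → ℝ) (g₁ g₂ : ℝ → ℝ → ℝ)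
    (ax bx ay b2 : ℝ)
    (hprod : ∀ x1 x2 y1 y2 : ℝ, g x1 x2 y1 y2 = g₁ x1 x2 * g₂ y1 y2)
    (h₁ : ∀ x y : ℝ, ax ≤ x → x < y → y ≤ bx → 0 ≤ g₁ x y)
    (h₂ : ∀ x y : ℝ, ay ≤ x → x < y → y ≤ b2 → 0 ≤ g₂ x y)
    (U₁ U₂ : ℝ)
    (hU₁ : upperNormLimit g₁ ax bx = (U₁ : EReal))
    (hU₂ : upperNormLimit g₂ ay b2 = (U₂ : EReal)) :
    upperRestrictedNormLimit g ax bx ay b2 = ((U₁ * U₂ : ℝ) : EReal) := by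
  have hsum (Dx : Division ax bx) (Dy : Division ay b2) :
      ∑ i ∈ range Dx.n, ∑ j ∈ range Dy.n, g (Dx.P i) (Dx.P (i + 1)) (Dy.P j) (Dy.P (j + 1)) =
        Dx.sum g₁ * Dy.sum g₂ := by
    simp only [hprod, Division.sum, Finset.sum_mul_sum]
  unfold upperRestrictedNormLimit
  refine EReal.iInf_sSup_eq_coe _ _ (fun z hz => ?_) (fun e z hz => ?_)
  · obtain ⟨e, he, hlt⟩ := Division.exists_forall_gridNormLt_sum_mul_sum_lt hU₁ hU₂ h₁ h₂ hz
    refine ⟨⟨e, he⟩, ?_⟩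
    rintro _ ⟨Dx, Dy, hD, rfl⟩
    rw [hsum]
    exact_mod_cast (hlt Dx Dy hD).le
  · obtain ⟨Dx, Dy, hD, hgt⟩ := Division.exists_gridNormLt_lt_sum_mul_sum hU₁ hU₂ e.2 hz
    exact ⟨_, ⟨Dx, Dy, hD, rfl⟩, by rw [hsum]; exact_mod_cast hgt.le⟩

/-- (III.4.2 Corollary): Product formula for two-dimensional restricted Burkill integrals
(norm-limits) of product functions: if `g(T) = g₁(I_x)·g₂(I_y)` for each rectangle
`T = I_x × I_y` and `g₁, g₂ ≥ 0`, then the upper restricted norm-limit of `g` over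
`[ax,bx] × [ay,by]` equals the product of the (finite) upper norm-limits of `g₁` over
`[ax, bx]` and of `g₂` over `[ay, by]`. -/
theorem upperRestrictedNormLimit_prod (g : ℝ → ℝ → ℝ → ℝ → ℝ) (g₁ g₂ : ℝ → ℝ → ℝ)
    (ax bx ay b2 : ℝ) (hx : ax < bx) (hy : ay < b2)
    (hprod : ∀ x1 x2 y1 y2 : ℝ, g x1 x2 y1 y2 = g₁ x1 x2 * g₂ y1 y2)
    (h₁ : ∀ x y : ℝ, ax ≤ x → x < y → y ≤ bx → 0 ≤ g₁ x y)
    (h₂ : ∀ x y : ℝ, ay ≤ x → x < y → y ≤ b2 → 0 ≤ g₂ x y)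
    (U₁ U₂ : ℝ)
    (hU₁ : upperNormLimit g₁ ax bx = (U₁ : EReal))
    (hU₂ : upperNormLimit g₂ ay b2 = (U₂ : EReal)) :
    upperRestrictedNormLimit g ax bx ay b2 = ((U₁ * U₂ : ℝ) : EReal) :=
  upperRestrictedNormLimit_prod_general g g₁ g₂ ax bx ay b2 hprod h₁ h₂ U₁ U₂ hU₁ hU₂
end
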